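/- Let W^{(G)} be the Grover-type potential on V vertices: W^{(G)}_m = 0 and W^{(G)}_u = V for u ≠ m, and let H(s) = (1−s)L + s·W^{(G)} with L the complete graph Laplacian. Then the smallest eigenvalue of H(s) equals (V/2)·[1 − √(1 − 4·((V−1)/V)·s(1−s))]. -/

import Mathlib

/-!
`H(s)` maps the span of `e_m` and `𝟙 - e_m` to itself and acts as `V` on its orthogonal
complement. On that plane it has characteristic polynomial `μ² - Vμ + s(1-s)V(V-1)`, whose smaller
root `μ₀ ≤ V/2` is the claimed value. So `μ₀` is an eigenvalue (with an explicit eigenvector),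
and `H(s) - μ₀` is positive semidefinite: by Cauchy–Schwarz on the coordinates other than `m`,
its quadratic form dominates a binary quadratic form in `(x_m, ∑_{u ≠ m} x_u)` whose
discriminant vanishes.
-/

open Matrix

/-- The smallest eigenvalue of a Hermitian matrix. -/
noncomputable def lamMin {n : ℕ} {A : Matrix (Fin n) (Fin n) ℝ}
    (hA : A.IsHermitian) : ℝ :=
  ⨅ i, hA.eigenvalues i

/-- The combinatorial Laplacian of the complete graph on `V` vertices:
`L = V·I − J`, where `J` is the all-ones matrix. -/
def cgL (V : ℕ) : Matrix (Fin V) (Fin V) ℝ :=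
  (V : ℝ) • (1 : Matrix (Fin V) (Fin V) ℝ) - Matrix.of (fun _ _ => (1 : ℝ))

theorem sq_sum_sub_le_mul_sum_sq_sub {ι : Type*} [Fintype ι] [DecidableEq ι] (x : ι → ℝ)
    (j : ι) : (∑ i, x i - x j) ^ 2 ≤ (Fintype.card ι - 1) * (∑ i, x i ^ 2 - x j ^ 2) := by
  have h := sq_sum_le_card_mul_sum_sq (s := Finset.univ.erase j) (f := x)
  rwa [Finset.sum_erase_eq_sub (Finset.mem_univ j), Finset.sum_erase_eq_sub (Finset.mem_univ j),
    Finset.card_erase_of_mem (Finset.mem_univ j), Finset.card_univ,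
    Nat.cast_pred (Fintype.card_pos_iff.2 ⟨j⟩)] at h

theorem quadratic_form_nonneg {a b c : ℝ} (ha : 0 ≤ a) (hc : 0 ≤ c) (hb : b ^ 2 ≤ a * c)
    (x y : ℝ) : 0 ≤ a * x ^ 2 + 2 * b * x * y + c * y ^ 2 := by
  rcases ha.eq_or_lt with rfl | ha
  · obtain rfl : b = 0 := by nlinarith
    simpa using mul_nonneg hc (sq_nonneg y)
  · refine nonneg_of_mul_nonneg_right ?_ ha
    calc 0 ≤ (a * x + b * y) ^ 2 + (a * c - b ^ 2) * y ^ 2 :=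
          add_nonneg (sq_nonneg _) (mul_nonneg (sub_nonneg.2 hb) (sq_nonneg y))
      _ = a * (a * x ^ 2 + 2 * b * x * y + c * y ^ 2) := by ring

namespace Matrix.IsHermitian

variable {n : Type*} [Fintype n] [DecidableEq n] {A : Matrix n n ℝ}

theorem le_eigenvalues_of_forall_le_dotProduct_mulVec (hA : A.IsHermitian) {μ : ℝ}
    (hμ : ∀ x, μ * (x ⬝ᵥ x) ≤ x ⬝ᵥ (A *ᵥ x)) (i : n) : μ ≤ hA.eigenvalues i := by
  set v : n → ℝ := ⇑(hA.eigenvectorBasis i)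
  have hv : 0 < v ⬝ᵥ v := by
    have : v ≠ 0 := by simpa [v] using hA.eigenvectorBasis.orthonormal.ne_zero i
    simpa using dotProduct_star_self_pos_iff.2 this
  have hμv := hμ v
  rw [hA.mulVec_eigenvectorBasis, dotProduct_smul, smul_eq_mul] at hμv
  exact le_of_mul_le_mul_right hμv hv

theorem exists_eigenvalues_eq_of_mulVec_eq_smul (hA : A.IsHermitian) {μ : ℝ} {v : n → ℝ}
    (hv : v ≠ 0) (hAv : A *ᵥ v = μ • v) : ∃ i, hA.eigenvalues i = μ := by
  have hμ : Module.End.HasEigenvalue (toLin' A) μ :=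
    Module.End.hasEigenvalue_of_hasEigenvector
      ⟨Module.End.mem_eigenspace_iff.2 (by simpa using hAv), hv⟩
  have := hμ.mem_spectrum
  rwa [spectrum_toLin', hA.spectrum_real_eq_range_eigenvalues] at this

end Matrix.IsHermitian

theorem lamMin_eq_of_mulVec_eq_smul {n : ℕ} {A : Matrix (Fin n) (Fin n) ℝ} (hA : A.IsHermitian)
    {μ : ℝ} (hμ : ∀ x, μ * (x ⬝ᵥ x) ≤ x ⬝ᵥ (A *ᵥ x)) {v : Fin n → ℝ} (hv : v ≠ 0)
    (hAv : A *ᵥ v = μ • v) : lamMin hA = μ := by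
  obtain ⟨i, hi⟩ := hA.exists_eigenvalues_eq_of_mulVec_eq_smul hv hAv
  have : Nonempty (Fin n) := ⟨i⟩
  exact ciInf_eq_of_forall_ge_of_forall_gt_exists_lt
    (hA.le_eigenvalues_of_forall_le_dotProduct_mulVec hμ) fun _ hw => ⟨i, hi ▸ hw⟩

theorem cgL_mulVec (V : ℕ) (x : Fin V → ℝ) (u : Fin V) :
    (cgL V *ᵥ x) u = V * x u - ∑ v, x v := by
  simp [cgL, mulVec, dotProduct, sub_mul, Finset.sum_sub_distrib, one_apply]

theorem dotProduct_cgL_mulVec (V : ℕ) (x : Fin V → ℝ) :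
    x ⬝ᵥ (cgL V *ᵥ x) = V * (x ⬝ᵥ x) - (∑ u, x u) ^ 2 := by
  simp only [dotProduct, cgL_mulVec, mul_sub, Finset.sum_sub_distrib, mul_left_comm _ (V : ℝ),
    ← Finset.mul_sum, ← Finset.sum_mul, sq]

def groverHam (V : ℕ) (m : Fin V) (s : ℝ) : Matrix (Fin V) (Fin V) ℝ :=
  (1 - s) • cgL V + s • diagonal (fun u : Fin V => if u = m then (0 : ℝ) else (V : ℝ))

section Grover

variable {V : ℕ} (m : Fin V) (s : ℝ)

theorem groverHam_mulVec (x : Fin V → ℝ) (u : Fin V) :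
    (groverHam V m s *ᵥ x) u =
      (1 - s) * (V * x u - ∑ v, x v) + s * ((if u = m then 0 else V) * x u) := by
  simp [groverHam, add_mulVec, smul_mulVec, cgL_mulVec, mulVec_diagonal]

theorem dotProduct_groverHam_mulVec (x : Fin V → ℝ) :
    x ⬝ᵥ (groverHam V m s *ᵥ x) =
      (1 - s) * (V * (x ⬝ᵥ x) - (∑ u, x u) ^ 2) + s * (V * (x ⬝ᵥ x - x m ^ 2)) := by
  have hW : x ⬝ᵥ (diagonal (fun u : Fin V => if u = m then (0 : ℝ) else (V : ℝ)) *ᵥ x) =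
      V * (x ⬝ᵥ x - x m ^ 2) := by
    have hterm : ∀ u, x u * ((if u = m then 0 else (V : ℝ)) * x u) =
        V * (x u * x u) - if u = m then V * x m ^ 2 else 0 := by
      intro u
      split_ifs with h <;> [subst h; skip] <;> ring
    simp only [dotProduct, mulVec_diagonal, hterm, Finset.sum_sub_distrib, Finset.sum_ite_eq',
      Finset.mem_univ, if_true, ← Finset.mul_sum]
    ring
  rw [groverHam, add_mulVec, smul_mulVec, smul_mulVec, dotProduct_add, dotProduct_smul,
    dotProduct_smul, dotProduct_cgL_mulVec, hW, smul_eq_mul, smul_eq_mul]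

/-- The eigenvector of `groverHam V m s` for an eigenvalue `μ` of its restriction to the span of
`e_m` and `𝟙 - e_m`. -/
def groverGroundState (μ : ℝ) : Fin V → ℝ :=
  fun u => if u = m then (1 - s) + s * V - μ else 1 - s

variable {m s}

theorem groverHam_mulVec_groverGroundState {μ : ℝ}
    (hμ : μ ^ 2 - V * μ + s * (1 - s) * V * (V - 1) = 0) :
    groverHam V m s *ᵥ groverGroundState m s μ = μ • groverGroundState m s μ := by
  have hsum : ∑ u, groverGroundState m s μ u = V * (1 - s) + (s * V - μ) := by
    have hsplit : ∀ u, groverGroundState m s μ u = (1 - s) + if u = m then s * V - μ else 0 := by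
      intro u
      unfold groverGroundState
      split_ifs <;> ring
    simp [hsplit, Finset.sum_add_distrib, mul_one_sub]
  ext u
  rw [groverHam_mulVec, hsum, Pi.smul_apply, smul_eq_mul]
  unfold groverGroundState
  split_ifs
  · linear_combination hμ
  · ring

theorem groverGroundState_ne_zero (hV : 2 ≤ V) {μ : ℝ} (hμ : μ ≤ V / 2) :
    groverGroundState m s μ ≠ 0 := by
  intro h
  obtain ⟨u, hu⟩ := Fintype.exists_ne_of_one_lt_card (by simpa using hV.trans_lt' one_lt_two) m
  have hu0 : 1 - s = 0 := by simpa [groverGroundState, hu] using congrFun h u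
  have hm0 : (1 - s) + s * V - μ = 0 := by simpa [groverGroundState] using congrFun h m
  have hV' : (2 : ℝ) ≤ V := by exact_mod_cast hV
  obtain rfl : s = 1 := by linarith
  linarith

end Grover

noncomputable def groverEnergy (V : ℕ) (s : ℝ) : ℝ :=
  ((V : ℝ) / 2) * (1 - Real.sqrt (1 - 4 * (((V : ℝ) - 1) / (V : ℝ)) * s * (1 - s)))

theorem groverEnergy_le_half (V : ℕ) (s : ℝ) : groverEnergy V s ≤ V / 2 := by
  have := Real.sqrt_nonneg (1 - 4 * (((V : ℝ) - 1) / (V : ℝ)) * s * (1 - s))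
  have : (0 : ℝ) ≤ V / 2 := by positivity
  unfold groverEnergy
  nlinarith

theorem groverEnergy_quadratic {V : ℕ} (hV : 1 ≤ V) (s : ℝ) :
    groverEnergy V s ^ 2 - V * groverEnergy V s + s * (1 - s) * V * (V - 1) = 0 := by
  have hV' : (1 : ℝ) ≤ V := by exact_mod_cast hV
  have hdisc : 0 ≤ 1 - 4 * (((V : ℝ) - 1) / V) * s * (1 - s) := by
    have h1 : ((V : ℝ) - 1) / V ≤ 1 := by rw [div_le_one (by linarith)]; linarith
    have h0 : 0 ≤ ((V : ℝ) - 1) / V := div_nonneg (by linarith) (by linarith)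
    nlinarith [sq_nonneg (2 * s - 1), mul_nonneg h0 (sq_nonneg (2 * s - 1))]
  have hsq : (V : ℝ) ^ 2 / 4 * (Real.sqrt (1 - 4 * (((V : ℝ) - 1) / V) * s * (1 - s)) ^ 2 - 1)
      = -(s * (1 - s) * V * (V - 1)) := by
    rw [Real.sq_sqrt hdisc]
    field_simp
    ring
  unfold groverEnergy
  linear_combination hsq

/-- With `α = (1-s)(n-1) - μ` and `β = (1-s) + sn - μ`, the equation for `μ` says
`αβ = (1-s)²(n-1)` and `μ ≤ n/2` says `α + β ≥ 0`. Hence `α, β ≥ 0`, and `(n-1)` times the gap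
is `(n-μ)((n-1)Q - T²)` plus the binary form `(n-1)α a² - 2(n-1)(1-s) a T + β T²`, whose
discriminant vanishes. -/
theorem grover_form_bound {n s μ a T Q : ℝ} (hn : 1 < n)
    (hμ : μ ^ 2 - n * μ + s * (1 - s) * n * (n - 1) = 0) (hμn : μ ≤ n / 2)
    (hTQ : T ^ 2 ≤ (n - 1) * Q) :
    μ * (a ^ 2 + Q) ≤ (1 - s) * (n * (a ^ 2 + Q) - (a + T) ^ 2) + s * (n * Q) := by
  have hprod : ((1 - s) * (n - 1) - μ) * ((1 - s) + s * n - μ) = (1 - s) ^ 2 * (n - 1) := by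
    linear_combination hμ
  have hprod_nonneg : 0 ≤ ((1 - s) * (n - 1) - μ) * ((1 - s) + s * n - μ) := by
    rw [hprod]
    exact mul_nonneg (sq_nonneg _) (by linarith)
  have hα : 0 ≤ (1 - s) * (n - 1) - μ := by nlinarith
  have hβ : 0 ≤ (1 - s) + s * n - μ := by nlinarith
  have hform := quadratic_form_nonneg (mul_nonneg (sub_nonneg.2 hn.le) hα) hβ
    (b := -((n - 1) * (1 - s))) (by nlinarith) a T
  have key : 0 ≤ (n - 1) *
      ((1 - s) * (n * (a ^ 2 + Q) - (a + T) ^ 2) + s * (n * Q) - μ * (a ^ 2 + Q)) := by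
    calc 0 ≤ (n - μ) * ((n - 1) * Q - T ^ 2) + ((n - 1) * ((1 - s) * (n - 1) - μ) * a ^ 2
          + 2 * -((n - 1) * (1 - s)) * a * T + ((1 - s) + s * n - μ) * T ^ 2) := by
          exact add_nonneg (mul_nonneg (by linarith) (sub_nonneg.2 hTQ)) hform
      _ = _ := by ring
  exact sub_nonneg.1 (nonneg_of_mul_nonneg_right key (by linarith))

theorem groverHam_lower_bound {V : ℕ} (hV : 2 ≤ V) (m : Fin V) (s : ℝ) (x : Fin V → ℝ) :
    groverEnergy V s * (x ⬝ᵥ x) ≤ x ⬝ᵥ (groverHam V m s *ᵥ x) := by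
  have hxx : x ⬝ᵥ x = ∑ u, x u ^ 2 := by simp [dotProduct, sq]
  have hCS := sq_sum_sub_le_mul_sum_sq_sub x m
  rw [Fintype.card_fin, ← hxx] at hCS
  have := grover_form_bound (a := x m) (by exact_mod_cast hV)
    (groverEnergy_quadratic (by omega) s) (groverEnergy_le_half V s) hCS
  rw [dotProduct_groverHam_mulVec]
  convert this using 2 <;> ring

theorem grover_ground_energy_general {V : ℕ} (hV : 2 ≤ V) (m : Fin V) (s : ℝ)
    (hH : ((1 - s) • cgL V +
        s • Matrix.diagonal (fun u : Fin V => if u = m then (0 : ℝ) else (V : ℝ))).IsHermitian) :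
    lamMin hH =
      ((V : ℝ) / 2) *
        (1 - Real.sqrt (1 - 4 * (((V : ℝ) - 1) / (V : ℝ)) * s * (1 - s))) :=
  lamMin_eq_of_mulVec_eq_smul (A := groverHam V m s) hH (groverHam_lower_bound hV m s)
    (groverGroundState_ne_zero hV (groverEnergy_le_half V s))
    (groverHam_mulVec_groverGroundState (groverEnergy_quadratic (by omega) s))

/-- For the Grover potential `W^{(G)}` (`0` at `m` and `V`
elsewhere), the smallest eigenvalue of `H(s) = (1−s)L + s·W^{(G)}` is
`(V/2)·[1 − √(1 − 4((V−1)/V)·s(1−s))]`. -/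
theorem grover_ground_energy {V : ℕ} (hV : 2 ≤ V) (m : Fin V) (s : ℝ)
    (hs : s ∈ Set.Icc (0 : ℝ) 1)
    (hH : ((1 - s) • cgL V +
        s • Matrix.diagonal (fun u : Fin V => if u = m then (0 : ℝ) else (V : ℝ))).IsHermitian) :
    lamMin hH =
      ((V : ℝ) / 2) *
        (1 - Real.sqrt (1 - 4 * (((V : ℝ) - 1) / (V : ℝ)) * s * (1 - s))) :=
  grover_ground_energy_general hV m s hH
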